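/- Let R be a commutative ring and M an R-module. Then M is universally torsionless if and only if M is a flat Mittag-Leffler module and for every maximal ideal 𝔪 ⊂ R the natural map M ⊗_R R/𝔪 → Hom_R(M*, R/𝔪) is injective. -/

import Mathlib

open TensorProduct

/-- The natural map `M ⊗ N → Hom(M*, N)`, `m ⊗ n ↦ (w ↦ w m • n)`. -/
noncomputable def natMap (R : Type*) [CommRing R] (M : Type*) [AddCommGroup M] [Module R M]
    (N : Type*) [AddCommGroup N] [Module R N] :
    M ⊗[R] N →ₗ[R] ((M →ₗ[R] R) →ₗ[R] N) :=
  (dualTensorHom R (Module.Dual R M) N).comp (LinearMap.rTensor N (Module.Dual.eval R M))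

/-!
Write `M⁺ = Hom_ℤ(M, ℚ/ℤ)`; it lives in the universe of `M`, so it is among the test modules.
If `x ≠ 0` in `M ⊗ N`, a character `χ` of `M ⊗ N` with `χ x ≠ 0` is the same as a map
`φ : N → M⁺`, and the evaluation pairing `M ⊗ M⁺ → ℚ/ℤ` shows `(1 ⊗ φ) x ≠ 0`. By naturality of
`M ⊗ N → Hom(M*, N)` in `N`, injectivity for `M⁺` therefore gives injectivity for every `N`, in
any universe; flatness and the Mittag-Leffler property follow from naturality as well.

Conversely, let `x ≠ 0` be in the kernel. By Zorn there is a submodule `P` maximal with `x ≠ 0`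
in `M ⊗ N/P`, so the image of `x` dies in `M ⊗ (N/P)/X` for every `X ≠ 0`. If the nonzero
submodules of `N/P` meet in `0`, then `N/P` embeds into the product of these quotients, and
flatness together with the Mittag-Leffler property kills `x`. Otherwise `N/P` has an essential
simple submodule `R s ≅ R/𝔪`; by right exactness `x` comes from `M ⊗ R s`, where the natural map
is injective by hypothesis.
-/

open LinearMap

section NatMap

variable {R : Type u} [CommRing R] {M : Type v} [AddCommGroup M] [Module R M]
  {N : Type*} [AddCommGroup N] [Module R N] {N' : Type*} [AddCommGroup N'] [Module R N']

@[simp]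
lemma natMap_tmul (m : M) (n : N) (w : Module.Dual R M) :
    natMap R M N (m ⊗ₜ n) w = w m • n := by
  simp [natMap]

lemma natMap_lTensor (f : N →ₗ[R] N') (x : M ⊗[R] N) (w : Module.Dual R M) :
    natMap R M N' (lTensor M f x) w = f (natMap R M N x w) := by
  induction x using TensorProduct.induction_on with
  | zero => simp
  | tmul m n => simp
  | add x y hx hy => simp [hx, hy]

lemma natMap_lTensor_eq_zero (f : N →ₗ[R] N') {x : M ⊗[R] N} (hx : natMap R M N x = 0) :
    natMap R M N' (lTensor M f x) = 0 :=
  LinearMap.ext fun w => by simp [natMap_lTensor, hx]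

lemma natMap_lTensor_eq_zero_iff {f : N →ₗ[R] N'} (hf : Function.Injective f) (x : M ⊗[R] N) :
    natMap R M N' (lTensor M f x) = 0 ↔ natMap R M N x = 0 := by
  simp only [LinearMap.ext_iff, natMap_lTensor, LinearMap.zero_apply]
  exact forall_congr' fun w => (injective_iff_map_eq_zero' f).mp hf _

lemma injective_lTensor_of_injective_natMap (h : Function.Injective (natMap R M N))
    {f : N →ₗ[R] N'} (hf : Function.Injective f) : Function.Injective (lTensor M f) := by
  rw [injective_iff_map_eq_zero]
  intro x hx
  exact h (by rw [map_zero, ← natMap_lTensor_eq_zero_iff hf, hx, map_zero])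

lemma injective_natMap_of_linearEquiv (e : N ≃ₗ[R] N') (h : Function.Injective (natMap R M N)) :
    Function.Injective (natMap R M N') := by
  rw [injective_iff_map_eq_zero]
  intro x hx
  obtain ⟨y, rfl⟩ := (LinearEquiv.lTensor M e).surjective x
  have hy : natMap R M N y = 0 := (natMap_lTensor_eq_zero_iff e.injective y).mp hx
  rw [h (hy.trans (map_zero _).symm), map_zero]

lemma injective_natMap_of_injective_natMap_characterModule
    (h : Function.Injective (natMap R M (CharacterModule M))) :
    Function.Injective (natMap R M N) := by
  rw [injective_iff_map_eq_zero]
  intro x hx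
  by_contra hx0
  obtain ⟨χ, hχ⟩ := CharacterModule.exists_character_apply_ne_zero_of_ne_zero hx0
  let φ : N →ₗ[R] CharacterModule M :=
    CharacterModule.curry (CharacterModule.dual (TensorProduct.comm R N M).toLinearMap χ)
  let ev : CharacterModule (M ⊗[R] CharacterModule M) := CharacterModule.dual
    (TensorProduct.comm R _ _).toLinearMap (CharacterModule.uncurry LinearMap.id)
  have hev (z : M ⊗[R] N) : ev (lTensor M φ z) = χ z := by
    induction z using TensorProduct.induction_on with
    | zero => simp
    | tmul m n => rfl
    | add z z' hz hz' => simp [hz, hz']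
  have hφx : lTensor M φ x = 0 := h (by rw [map_zero, natMap_lTensor_eq_zero φ hx])
  exact hχ (by rw [← hev, hφx, map_zero])

lemma Module.Flat.of_injective_natMap
    (h : ∀ (N : Type u) [AddCommGroup N] [Module R N], Function.Injective (natMap R M N)) :
    Module.Flat R M :=
  Module.Flat.iff_lTensor_injective'.mpr fun I =>
    injective_lTensor_of_injective_natMap (h I) I.injective_subtype

lemma TensorProduct.piRightHom_apply_eq_lTensor_proj {ι : Type*} {Q : ι → Type*}
    [∀ i, AddCommGroup (Q i)] [∀ i, Module R (Q i)] (x : M ⊗[R] (∀ i, Q i)) (i : ι) :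
    piRightHom R R M Q x i = lTensor M (LinearMap.proj i) x := by
  induction x using TensorProduct.induction_on with
  | zero => simp
  | tmul m q => simp
  | add x y hx hy => simp [hx, hy]

lemma injective_piRightHom_of_injective_natMap {ι : Type*} {Q : ι → Type*}
    [∀ i, AddCommGroup (Q i)] [∀ i, Module R (Q i)]
    (h : Function.Injective (natMap R M (∀ i, Q i))) :
    Function.Injective (piRightHom R R M Q) := by
  rw [injective_iff_map_eq_zero]
  intro x hx
  refine h (LinearMap.ext fun w => funext fun i => ?_)
  have hi := natMap_lTensor (LinearMap.proj i : (∀ i, Q i) →ₗ[R] Q i) x w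
  rw [← piRightHom_apply_eq_lTensor_proj, hx] at hi
  simpa using hi.symm

end NatMap

section SubdirectlyIrreducible

variable {R : Type u} [CommRing R] {M : Type v} [AddCommGroup M] [Module R M]
  {N : Type*} [AddCommGroup N] [Module R N]

lemma ker_lTensor_mkQ_eq_map₂ (P : Submodule R N) :
    ker (lTensor M P.mkQ) = Submodule.map₂ (TensorProduct.mk R M N) ⊤ P := by
  rw [lTensor_mkQ, LinearMap.lTensor, TensorProduct.range_map, range_id, Submodule.range_subtype]

lemma exists_lTensor_mkQ_eq_zero_of_directedOn {c : Set (Submodule R N)} (hne : c.Nonempty)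
    (hc : DirectedOn (· ≤ ·) c) {x : M ⊗[R] N} (hx : lTensor M (sSup c).mkQ x = 0) :
    ∃ P ∈ c, lTensor M P.mkQ x = 0 := by
  have : Nonempty c := hne.to_subtype
  simp only [← LinearMap.mem_ker, ker_lTensor_mkQ_eq_map₂, sSup_eq_iSup',
    Submodule.map₂_iSup_right] at hx ⊢
  rw [Submodule.mem_iSup_of_directed] at hx
  · obtain ⟨P, hP⟩ := hx
    exact ⟨P, P.2, hP⟩
  · rintro ⟨P, hP⟩ ⟨Q, hQ⟩
    obtain ⟨T, hT, hPT, hQT⟩ := hc P hP Q hQ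
    exact ⟨⟨T, hT⟩, Submodule.map₂_le_map₂_right hPT, Submodule.map₂_le_map₂_right hQT⟩

lemma exists_maximal_lTensor_mkQ_ne_zero {x : M ⊗[R] N} (hx : x ≠ 0) :
    ∃ P : Submodule R N, Maximal (fun P : Submodule R N => lTensor M P.mkQ x ≠ 0) P := by
  have hbot : lTensor M (⊥ : Submodule R N).mkQ x ≠ 0 := by
    rw [Ne, ← LinearMap.mem_ker, ker_lTensor_mkQ_eq_map₂, Submodule.map₂_bot_right]
    exact hx
  have hchain : ∀ c ⊆ {P : Submodule R N | lTensor M P.mkQ x ≠ 0}, IsChain (· ≤ ·) c →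
      ∀ P₀ ∈ c, ∃ Q ∈ {P : Submodule R N | lTensor M P.mkQ x ≠ 0}, ∀ P ∈ c, P ≤ Q := by
    intro c hc hchain P₀ hP₀
    refine ⟨sSup c, fun hsup => ?_, fun _ => le_sSup⟩
    obtain ⟨P, hPc, hP⟩ :=
      exists_lTensor_mkQ_eq_zero_of_directedOn ⟨P₀, hP₀⟩ hchain.directedOn hsup
    exact hc hPc hP
  obtain ⟨P, -, hP⟩ := zorn_le_nonempty₀ _ hchain ⊥ hbot
  exact ⟨P, hP⟩

lemma lTensor_mkQ_eq_zero_of_maximal {x : M ⊗[R] N} {P : Submodule R N}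
    (hP : Maximal (fun P : Submodule R N => lTensor M P.mkQ x ≠ 0) P)
    {X : Submodule R (N ⧸ P)} (hX : X ≠ ⊥) : lTensor M X.mkQ (lTensor M P.mkQ x) = 0 := by
  have hlt : P < X.comap P.mkQ :=
    calc P = (⊥ : Submodule R (N ⧸ P)).comap P.mkQ := by
          rw [Submodule.comap_bot, Submodule.ker_mkQ]
      _ < X.comap P.mkQ := (Submodule.comap_lt_comap_iff_of_surjective P.mkQ_surjective).mpr
          (bot_lt_iff_ne_bot.mpr hX)
  have hx : lTensor M (X.comap P.mkQ).mkQ x = 0 := not_not.mp (hP.not_prop_of_gt hlt)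
  have hker : X.comap P.mkQ ≤ ker (X.mkQ ∘ₗ P.mkQ) := by rw [ker_comp, Submodule.ker_mkQ]
  rw [← lTensor_comp_apply, ← Submodule.liftQ_mkQ _ _ hker, lTensor_comp_apply, hx, map_zero]

lemma eq_zero_of_iInf_eq_bot [Module.Flat R M] {ι : Type*} {X : ι → Submodule R N}
    (hML : Function.Injective (piRightHom R R M fun i => N ⧸ X i)) (hX : ⨅ i, X i = ⊥)
    {x : M ⊗[R] N} (hx : ∀ i, lTensor M (X i).mkQ x = 0) : x = 0 := by
  let δ : N →ₗ[R] ∀ i, N ⧸ X i := LinearMap.pi fun i => (X i).mkQ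
  have hδ : Function.Injective δ := by
    rw [← LinearMap.ker_eq_bot, LinearMap.ker_pi]
    simpa only [Submodule.ker_mkQ] using hX
  have hδx : lTensor M δ x = 0 := hML <| funext fun i => by
    rw [piRightHom_apply_eq_lTensor_proj, ← lTensor_comp_apply, proj_pi, hx, map_zero]
    rfl
  exact Module.Flat.lTensor_preserves_injective_linearMap δ hδ (by rw [hδx, map_zero])

lemma isSimpleModule_span_of_forall_mem {s : N} (hs : s ≠ 0)
    (h : ∀ X : Submodule R N, X ≠ ⊥ → s ∈ X) : IsSimpleModule R (R ∙ s) := by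
  rw [isSimpleModule_iff_isAtom]
  refine ⟨by simpa using hs, fun X hX => by_contra fun hX0 => hX.not_ge ?_⟩
  rw [Submodule.span_singleton_le_iff_mem]
  exact h X hX0

lemma eq_zero_of_forall_lTensor_mkQ_eq_zero [Module.Flat R M]
    (hML : Function.Injective
      (piRightHom R R M fun X : {X : Submodule R N // X ≠ ⊥} => N ⧸ X.1))
    (hres : ∀ I : Ideal R, I.IsMaximal → Function.Injective (natMap R M (R ⧸ I)))
    {x : M ⊗[R] N} (hx : natMap R M N x = 0)
    (hcrit : ∀ X : Submodule R N, X ≠ ⊥ → lTensor M X.mkQ x = 0) : x = 0 := by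
  by_cases hbot : ⨅ X : {X : Submodule R N // X ≠ ⊥}, X.1 = ⊥
  · exact eq_zero_of_iInf_eq_bot hML hbot fun X => hcrit X.1 X.2
  -- `s` lies in every nonzero submodule, so `R ∙ s` is simple and `x` factors through it.
  obtain ⟨s, hs, hs0⟩ := (Submodule.ne_bot_iff _).mp hbot
  have : IsSimpleModule R (R ∙ s) :=
    isSimpleModule_span_of_forall_mem hs0 fun X hX => Submodule.mem_iInf _ |>.mp hs ⟨X, hX⟩
  obtain ⟨I, hI, ⟨e⟩⟩ := isSimpleModule_iff_quot_maximal.mp this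
  obtain ⟨y, rfl⟩ : x ∈ range (lTensor M (R ∙ s).subtype) := by
    rw [← lTensor_mkQ]
    exact hcrit _ (by simpa using hs0)
  have hy : natMap R M _ y = 0 :=
    (natMap_lTensor_eq_zero_iff (R ∙ s).injective_subtype y).mp hx
  rw [injective_natMap_of_linearEquiv e.symm (hres I hI) (hy.trans (map_zero _).symm), map_zero]

end SubdirectlyIrreducible

theorem stmt16 (R : Type u) [CommRing R] (M : Type v) [AddCommGroup M] [Module R M] :
    (∀ (N : Type v) [AddCommGroup N] [Module R N], Function.Injective (natMap R M N)) ↔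
      (Module.Flat R M ∧
        (∀ (g : Type v) (Q : g → Type v) [∀ i, AddCommGroup (Q i)] [∀ i, Module R (Q i)],
          Function.Injective (TensorProduct.piRightHom R R M Q)) ∧
        ∀ (I : Ideal R), I.IsMaximal → Function.Injective (natMap R M (R ⧸ I))) := by
  constructor
  · intro hUT
    have hχ := hUT (CharacterModule M)
    exact ⟨.of_injective_natMap fun _ _ _ =>
        injective_natMap_of_injective_natMap_characterModule hχ,
      fun _ _ _ _ => injective_piRightHom_of_injective_natMap (hUT _),
      fun _ _ => injective_natMap_of_injective_natMap_characterModule hχ⟩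
  · rintro ⟨hflat, hML, hres⟩ N _ _
    rw [injective_iff_map_eq_zero]
    intro x hx
    by_contra hx0
    obtain ⟨P, hP⟩ := exists_maximal_lTensor_mkQ_ne_zero hx0
    exact hP.prop <| eq_zero_of_forall_lTensor_mkQ_eq_zero (hML _ _) hres
      (natMap_lTensor_eq_zero _ hx) fun X hX => lTensor_mkQ_eq_zero_of_maximal hP hX
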